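/- arXiv:2003.00964 — 2 statements merged into one kernel-verified Lean document; each statement's English description precedes it below -/
import Mathlib

section
/- Let G be a finite simple graph without self-loops on vertex set V = {1,…,n}, and let T be a random treatment vector distributed uniformly over all assignments in {0,1}^n with exactly n⁽¹⁾ treated units, where 0 < n⁽¹⁾ < n. For each unit i, suppose the observed outcome is Y_i = T_i·τ_i + F(G_{N_i}^T) + ε_i, where τ_i ∈ ℝ is a constant, ε_i is an integrable random variable independent of T with E[ε_i] = α, and F is a real-valued function on vertex-labeled graphs invariant under label-preserving isomorphism. Fix for each i a vertex-labeled graph g_i such that the events {G_{N_i}^T ≃ g_i, T_i = 1} and {G_{N_i}^T ≃ g_i, T_i = 0} have positive probability. Then (1/n⁽¹⁾) Σ_{i=1}^n E[ T_i · ( E[Y_i | G_{N_i}^T ≃ g_i, T_i = 1] − E[Y_i | G_{N_i}^T ≃ g_i, T_i = 0] ) ] = (1/n) Σ_{i=1}^n E[Y_i(1, 0_{−i}) − Y_i(0, 0_{−i})], where Y_i(t) = t_i·τ_i + F(G_{N_i}^t) + ε_i denotes potential outcomes; i.e., the average direct effect is identified by the matched conditional contrasts. -/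
structure LGraph (V : Type) where
  verts : Set V
  Adj : V → V → Prop
  symm : ∀ a b, Adj a b → Adj b a
  loopless : ∀ a, ¬ Adj a a
  mem_of_adj : ∀ a b, Adj a b → a ∈ verts ∧ b ∈ verts
  label : verts → Bool

/-- Label-preserving graph isomorphism between vertex-labeled graphs. -/
def LGraph.Iso {V W : Type} (g : LGraph V) (h : LGraph W) : Prop :=
  ∃ e : g.verts ≃ h.verts,
    (∀ a b : g.verts, g.Adj ↑a ↑b ↔ h.Adj ↑(e a) ↑(e b)) ∧
    (∀ a : g.verts, g.label a = h.label (e a))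

/-- The labeled neighborhood graph of unit `i`: subgraph of `G` induced by the
neighbors of `i`, with vertices labeled by the treatment `t`. -/
def nbhdGraph {V : Type} (G : SimpleGraph V) (t : V → Bool) (i : V) : LGraph V where
  verts := G.neighborSet i
  Adj a b := G.Adj a b ∧ a ∈ G.neighborSet i ∧ b ∈ G.neighborSet i
  symm _ _ h := ⟨h.1.symm, h.2.2, h.2.1⟩
  loopless a h := G.loopless.irrefl a h.1
  mem_of_adj _ _ h := h.2
  label v := t v.1

def b2r (b : Bool) : ℝ := if b then 1 else 0

/-- `g'` is a subgraph of `g` (vertex subset, edge subset, labels agree). -/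
def LGraph.IsSubgraph {V : Type} (g' g : LGraph V) : Prop :=
  g'.verts ⊆ g.verts ∧
  (∀ a b, g'.Adj a b → g.Adj a b) ∧
  (∀ (v : V) (h' : v ∈ g'.verts) (h : v ∈ g.verts), g'.label ⟨v, h'⟩ = g.label ⟨v, h⟩)

/-- Label-preserving isomorphism classes of vertex-labeled graphs on `V`. -/
def LClass (V : Type) := Quot (@LGraph.Iso V V)

/-- `subCount c g`: the number of subgraphs of `g` in the labeled isomorphism class `c`. -/
noncomputable def subCount {V : Type} (c : LClass V) (g : LGraph V) : ℕ :=
  Nat.card {g' : LGraph V // g'.IsSubgraph g ∧ Quot.mk _ g' = c}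

/-- The weighted Hamming distance between subgraph-count profiles. -/
noncomputable def dw {V : Type} (w : LClass V → ℝ) (g g' : LGraph V) : ℝ :=
  ∑ᶠ c : LClass V, Set.indicator {c' : LClass V | subCount c' g ≠ subCount c' g'} w c

/-- Number of treated units in an assignment. -/
def countTreated {n : ℕ} (t : Fin n → Bool) : ℕ :=
  (Finset.univ.filter fun j => t j = true).card

open MeasureTheory
open scoped ENNReal

/-- Conditional expectation given an event `A`: `E[Y | A] = E[Y·1_A] / P(A)`. -/
noncomputable def condExpEvent {Ω : Type} [MeasurableSpace Ω] (μ : Measure Ω)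
    (A : Set Ω) (Y : Ω → ℝ) : ℝ :=
  (∫ ω in A, Y ω ∂μ) / (μ A).toReal

/-!
On the event `{G_{N_i}^T ≃ g_i, T_i = b}` the observed outcome is `b τ_i + F(g_i) + ε_i`,
because `F` is invariant under labelled isomorphism. As `ε_i` is independent of `T`, hence of
that event, its conditional mean there is `α`, so every matched contrast equals `τ_i`. Under
complete randomization `P(T_i = 1) = C(n-1, n⁽¹⁾-1) / C(n, n⁽¹⁾) = n⁽¹⁾/n`, which turns the left
side into `(1/n) Σ τ_i`. On the right, `i` is not its own neighbour, so both potential outcomes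
see the same labelled neighbourhood and differ by exactly `τ_i`.

`T` is not assumed measurable; its fibres are only known to have outer measures summing to `1`,
which already makes them null-measurable.
-/

open Set Finset

section Measure

variable {Ω : Type*} [MeasurableSpace Ω] {μ : Measure Ω}

theorem nullMeasurableSet_of_measure_add_measure_compl_le [IsFiniteMeasure μ] {s : Set Ω}
    (h : μ s + μ sᶜ ≤ μ univ) : NullMeasurableSet s μ := by
  set H := toMeasurable μ s
  set H' := toMeasurable μ sᶜ
  have hcover : H ∪ H' = univ := eq_univ_of_forall fun ω =>
    (em (ω ∈ s)).imp (subset_toMeasurable μ s ·) (subset_toMeasurable μ sᶜ ·)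
  have hoverlap : μ (H ∩ H') = 0 := by
    have hsplit := measure_union_add_inter (μ := μ) H (measurableSet_toMeasurable μ sᶜ)
    rw [hcover, measure_toMeasurable, measure_toMeasurable] at hsplit
    refine nonpos_iff_eq_zero.mp (ENNReal.le_of_add_le_add_left (measure_ne_top μ univ) ?_)
    rw [add_zero, hsplit]
    exact h
  refine (measurableSet_toMeasurable μ s).nullMeasurableSet.congr (ae_eq_set.mpr ⟨?_, ?_⟩)
  · exact measure_mono_null (show H \ s ⊆ H ∩ H' from fun ω hω =>
      ⟨hω.1, subset_toMeasurable μ sᶜ hω.2⟩) hoverlap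
  · rw [sdiff_eq_empty.mpr (subset_toMeasurable μ s), measure_empty]

theorem setIntegral_eq_integral_mul_measureReal_of_measure_inter {f : Ω → ℝ}
    (hf : AEMeasurable f μ) {K : Set Ω}
    (hK : ∀ B, MeasurableSet B → μ (f ⁻¹' B ∩ K) = μ (f ⁻¹' B) * μ K) :
    ∫ ω in K, f ω ∂μ = (∫ ω, f ω ∂μ) * μ.real K := by
  have hmap : (μ.restrict K).map f = μ K • μ.map f := by
    ext B hB
    rw [Measure.map_apply_of_aemeasurable hf.restrict hB,
      Measure.restrict_apply₀ (hf.restrict.nullMeasurable hB), hK B hB, Measure.smul_apply,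
      Measure.map_apply_of_aemeasurable hf hB, smul_eq_mul, mul_comm]
  calc ∫ ω in K, f ω ∂μ = ∫ x, x ∂(μ.restrict K).map f :=
        (integral_map hf.restrict aestronglyMeasurable_id).symm
    _ = (∫ x, x ∂μ.map f) * μ.real K := by
        rw [hmap, integral_smul_measure, smul_eq_mul, mul_comm, measureReal_def]
    _ = (∫ ω, f ω ∂μ) * μ.real K := by
        congr 1
        exact integral_map hf aestronglyMeasurable_id

theorem integral_b2r_mul_const {p : Ω → Bool} (hp : NullMeasurableSet {ω | p ω = true} μ)
    (c : ℝ) : ∫ ω, b2r (p ω) * c ∂μ = μ.real {ω | p ω = true} * c := by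
  have hind : (fun ω => b2r (p ω) * c) = {ω | p ω = true}.indicator fun _ => c := by
    funext ω
    by_cases h : p ω <;> simp [b2r, h]
  rw [hind, integral_indicator₀ hp, setIntegral_const, smul_eq_mul]

variable {α : Type*} {T : Ω → α}

theorem nullMeasurableSet_preimage_singleton_of_sum_measure_eq [Fintype α] [IsFiniteMeasure μ]
    (h : ∑ a, μ (T ⁻¹' {a}) = μ univ) (a : α) : NullMeasurableSet (T ⁻¹' {a}) μ := by
  classical
  refine nullMeasurableSet_of_measure_add_measure_compl_le ?_
  have hcompl : (T ⁻¹' {a})ᶜ = ⋃ b ∈ univ.erase a, T ⁻¹' {b} := by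
    ext ω; simp [eq_comm]
  calc μ (T ⁻¹' {a}) + μ (T ⁻¹' {a})ᶜ
      ≤ μ (T ⁻¹' {a}) + ∑ b ∈ univ.erase a, μ (T ⁻¹' {b}) := by
        rw [hcompl]; gcongr; exact measure_biUnion_finset_le _ _
    _ = μ univ := by rw [add_sum_erase _ (fun b => μ (T ⁻¹' {b})) (mem_univ a), h]

theorem nullMeasurableSet_preimage_of_singleton [Countable α]
    (hT : ∀ a, NullMeasurableSet (T ⁻¹' {a}) μ) (S : Set α) : NullMeasurableSet (T ⁻¹' S) μ := by
  rw [← biUnion_preimage_singleton]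
  exact .biUnion S.to_countable fun a _ => hT a

theorem measure_inter_preimage_eq_sum (hT : ∀ a, NullMeasurableSet (T ⁻¹' {a}) μ) {E : Set Ω}
    (hE : NullMeasurableSet E μ) (S : Finset α) :
    μ (E ∩ T ⁻¹' S) = ∑ a ∈ S, μ (E ∩ T ⁻¹' {a}) := by
  have hunion : E ∩ T ⁻¹' S = ⋃ a ∈ S, E ∩ T ⁻¹' {a} := by ext; simp
  rw [hunion, measure_biUnion_finset₀]
  · intro a _ b _ hab
    exact (((Set.disjoint_singleton.mpr hab).preimage T).mono inter_subset_right
      inter_subset_right).aedisjoint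
  · exact fun a _ => hE.inter (hT a)

theorem measure_preimage_eq_sum (hT : ∀ a, NullMeasurableSet (T ⁻¹' {a}) μ) (S : Finset α) :
    μ (T ⁻¹' S) = ∑ a ∈ S, μ (T ⁻¹' {a}) := by
  simpa using measure_inter_preimage_eq_sum hT nullMeasurableSet_univ S

theorem measure_inter_preimage_eq_mul_of_singleton [Finite α]
    (hT : ∀ a, NullMeasurableSet (T ⁻¹' {a}) μ) {E : Set Ω} (hE : NullMeasurableSet E μ)
    (hind : ∀ a, μ (E ∩ T ⁻¹' {a}) = μ E * μ (T ⁻¹' {a})) (S : Set α) :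
    μ (E ∩ T ⁻¹' S) = μ E * μ (T ⁻¹' S) := by
  obtain ⟨F, rfl⟩ := S.toFinite.exists_finset_coe
  rw [measure_preimage_eq_sum hT, mul_sum, measure_inter_preimage_eq_sum hT hE]
  exact sum_congr rfl fun a _ => hind a

end Measure

theorem condExpEvent_eq_add_integral_of_measure_inter {Ω : Type} [MeasurableSpace Ω]
    {μ : Measure Ω} [IsFiniteMeasure μ] {A : Set Ω}
    {Y ε : Ω → ℝ} {c : ℝ} (hA : NullMeasurableSet A μ) (hA0 : μ A ≠ 0)
    (hY : EqOn Y (fun ω => c + ε ω) A) (hε : Integrable ε μ)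
    (hind : ∀ B, MeasurableSet B → μ (ε ⁻¹' B ∩ A) = μ (ε ⁻¹' B) * μ A) :
    condExpEvent μ A Y = c + ∫ ω, ε ω ∂μ := by
  have hA0' : μ.real A ≠ 0 := (ENNReal.toReal_pos hA0 (measure_ne_top μ A)).ne'
  rw [condExpEvent, setIntegral_congr_fun₀ hA hY,
    integral_add (integrable_const c) hε.integrableOn, setIntegral_const,
    setIntegral_eq_integral_mul_measureReal_of_measure_inter hε.aemeasurable hind, smul_eq_mul,
    ← measureReal_def]
  field_simp

theorem nbhdGraph_iso_of_eqOn {V : Type} (G : SimpleGraph V) {t t' : V → Bool} {i : V}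
    (h : EqOn t t' (G.neighborSet i)) : (nbhdGraph G t i).Iso (nbhdGraph G t' i) :=
  ⟨Equiv.refl _, fun _ _ => Iff.rfl, fun a => h a.2⟩

theorem nbhdGraph_iso_of_treat_self {V : Type} [DecidableEq V] (G : SimpleGraph V) (i : V) :
    (nbhdGraph G (fun j => if j = i then true else false) i).Iso (nbhdGraph G (fun _ => false) i) :=
  nbhdGraph_iso_of_eqOn G fun _ hj => if_neg (G.ne_of_adj hj).symm

section Counting

variable {n : ℕ}

theorem card_countTreated_eq_and_eq_card_filter_powersetCard (k : ℕ)
    (p : Finset (Fin n) → Prop) [DecidablePred p] :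
    #{t : Fin n → Bool | countTreated t = k ∧ p (univ.filter fun j => t j = true)}
      = #{s ∈ powersetCard k univ | p s} := by
  refine card_nbij' (fun t => univ.filter fun j => t j = true) (fun s j => decide (j ∈ s))
    ?_ ?_ ?_ ?_
  · intro t ht
    simpa [countTreated] using (mem_filter.mp (mem_coe.mp ht)).2
  · intro s hs
    refine mem_coe.mpr (mem_filter.mpr ⟨mem_univ _, ?_⟩)
    simpa [countTreated] using (mem_filter.mp (mem_coe.mp hs))
  · intro t _
    funext j
    simp
  · intro s _
    ext j
    simp

theorem card_countTreated_eq (k : ℕ) :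
    #{t : Fin n → Bool | countTreated t = k} = n.choose k := by
  simpa using card_countTreated_eq_and_eq_card_filter_powersetCard (n := n) k (fun _ => True)

theorem card_countTreated_eq_and_apply_eq_true {k : ℕ} (hk : 0 < k) (i : Fin n) :
    #{t : Fin n → Bool | countTreated t = k ∧ t i = true} = (n - 1).choose (k - 1) := by
  have h := card_countTreated_eq_and_eq_card_filter_powersetCard k (fun s => {i} ⊆ s)
  rw [card_filter_powersetCard_subset _ _ _ (subset_univ _)
    (by rw [Finset.card_singleton]; exact hk)] at h
  simpa using h

end Counting

theorem Nat.cast_choose_pred_div_cast_choose {n k : ℕ} (hk : 0 < k) (hkn : k ≤ n) :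
    ((n - 1).choose (k - 1) : ℝ) / n.choose k = k / n := by
  obtain ⟨m, rfl⟩ : ∃ m, n = m + 1 := ⟨n - 1, by omega⟩
  obtain ⟨j, rfl⟩ : ∃ j, k = j + 1 := ⟨k - 1, by omega⟩
  have hpos : ((m + 1).choose (j + 1) : ℝ) ≠ 0 := by exact_mod_cast (Nat.choose_pos hkn).ne'
  have h : ((m + 1 : ℕ) : ℝ) * m.choose j = (m + 1).choose (j + 1) * (j + 1 : ℕ) := by
    exact_mod_cast Nat.add_one_mul_choose_eq m j
  rw [Nat.add_sub_cancel, Nat.add_sub_cancel, div_eq_div_iff hpos (by positivity)]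
  linarith

section CompleteRandomization

variable {Ω : Type*} [MeasurableSpace Ω] {μ : Measure Ω} {n n1 : ℕ} {T : Ω → Fin n → Bool}

def IsCompletelyRandomized (μ : Measure Ω) (T : Ω → Fin n → Bool) (n1 : ℕ) : Prop :=
  ∀ t, μ (T ⁻¹' {t}) = if countTreated t = n1 then ((n.choose n1 : ℝ≥0∞))⁻¹ else 0

namespace IsCompletelyRandomized

theorem sum_measure_preimage_singleton (hT : IsCompletelyRandomized μ T n1) (hn1 : n1 ≤ n) :
    ∑ t, μ (T ⁻¹' {t}) = 1 := by
  rw [sum_congr rfl fun t _ => hT t, sum_ite, sum_const_zero, add_zero, sum_const,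
    card_countTreated_eq, nsmul_eq_mul]
  exact ENNReal.mul_inv_cancel (by exact_mod_cast (Nat.choose_pos hn1).ne')
    (ENNReal.natCast_ne_top _)

theorem nullMeasurableSet_preimage_singleton [IsProbabilityMeasure μ]
    (hT : IsCompletelyRandomized μ T n1) (hn1 : n1 ≤ n) (t : Fin n → Bool) :
    NullMeasurableSet (T ⁻¹' {t}) μ :=
  nullMeasurableSet_preimage_singleton_of_sum_measure_eq
    (by rw [hT.sum_measure_preimage_singleton hn1, measure_univ]) t

theorem measureReal_apply_eq_true [IsProbabilityMeasure μ] (hT : IsCompletelyRandomized μ T n1)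
    (h0 : 0 < n1) (hn1 : n1 ≤ n) (i : Fin n) :
    μ.real {ω | T ω i = true} = n1 / n := by
  have hS : {ω | T ω i = true} = T ⁻¹' ↑(univ.filter fun t : Fin n → Bool => t i = true) := by
    ext; simp
  have hcount : ∑ t ∈ univ.filter (fun t : Fin n → Bool => t i = true), μ (T ⁻¹' {t})
      = #{t : Fin n → Bool | countTreated t = n1 ∧ t i = true} * ((n.choose n1 : ℝ≥0∞))⁻¹ := by
    rw [sum_congr rfl fun t _ => hT t, ← sum_filter, filter_filter, sum_const, nsmul_eq_mul]
    simp_rw [and_comm]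
  rw [measureReal_def, hS, measure_preimage_eq_sum (hT.nullMeasurableSet_preimage_singleton hn1),
    hcount, card_countTreated_eq_and_apply_eq_true h0, ENNReal.toReal_mul, ENNReal.toReal_inv,
    ENNReal.toReal_natCast, ENNReal.toReal_natCast, ← div_eq_mul_inv]
  exact Nat.cast_choose_pred_div_cast_choose h0 hn1

end IsCompletelyRandomized

end CompleteRandomization

/-- under complete randomization of `n⁽¹⁾` treated units, outcomes
`Y_i = T_i·τ_i + F(G_{N_i}^T) + ε_i` with `F` iso-invariant and `ε_i ⫫ T`, `E[ε_i] = α`,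
the average direct effect `(1/n) Σ_i E[Y_i(1,0_{−i}) − Y_i(0,0_{−i})]` is identified by
the weighted matched conditional contrasts. -/
theorem ade_identified_by_matched_contrasts
    (n n1 : ℕ) (hn1 : 0 < n1) (hn1n : n1 < n)
    (G : SimpleGraph (Fin n))
    (Ω : Type) [MeasurableSpace Ω] (μ : Measure Ω) [IsProbabilityMeasure μ]
    (T : Ω → (Fin n → Bool))
    -- complete randomization: `T` uniform over assignments with exactly `n1` treated
    (hTunif : ∀ t : Fin n → Bool, countTreated t = n1 →
      μ {ω | T ω = t} = ((n.choose n1 : ℝ≥0∞))⁻¹)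
    (hTsupp : ∀ t : Fin n → Bool, countTreated t ≠ n1 → μ {ω | T ω = t} = 0)
    (τ : Fin n → ℝ) (α : ℝ) (F : LGraph (Fin n) → ℝ) (ε : Fin n → Ω → ℝ)
    (hF : ∀ g g' : LGraph (Fin n), g.Iso g' → F g = F g')
    (hε : ∀ i, Integrable (ε i) μ) (hεmean : ∀ i, ∫ ω, ε i ω ∂μ = α)
    (hind : ∀ i (B : Set ℝ), MeasurableSet B → ∀ t : Fin n → Bool,
      μ ({ω | ε i ω ∈ B} ∩ {ω | T ω = t}) = μ {ω | ε i ω ∈ B} * μ {ω | T ω = t})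
    -- observed outcomes
    (Y : Fin n → Ω → ℝ)
    (hY : ∀ i ω, Y i ω = b2r (T ω i) * τ i + F (nbhdGraph G (T ω) i) + ε i ω)
    -- potential outcomes
    (Ypot : Fin n → (Fin n → Bool) → Ω → ℝ)
    (hYpot : ∀ i t ω, Ypot i t ω = b2r (t i) * τ i + F (nbhdGraph G t i) + ε i ω)
    -- matched labeled graphs with positive-probability matching events
    (g : Fin n → LGraph (Fin n))
    (hA1 : ∀ i, 0 < μ {ω | (nbhdGraph G (T ω) i).Iso (g i) ∧ T ω i = true})
    (hA0 : ∀ i, 0 < μ {ω | (nbhdGraph G (T ω) i).Iso (g i) ∧ T ω i = false}) :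
    (1 / (n1 : ℝ)) * ∑ i : Fin n, ∫ ω, b2r (T ω i) *
        (condExpEvent μ {ω' | (nbhdGraph G (T ω') i).Iso (g i) ∧ T ω' i = true} (Y i) -
         condExpEvent μ {ω' | (nbhdGraph G (T ω') i).Iso (g i) ∧ T ω' i = false} (Y i)) ∂μ
      = (1 / (n : ℝ)) * ∑ i : Fin n,
          ∫ ω, (Ypot i (fun j => if j = i then true else false) ω -
                Ypot i (fun _ => false) ω) ∂μ := by
  have hT : IsCompletelyRandomized μ T n1 := fun t => by
    split_ifs with h
    exacts [hTunif t h, hTsupp t h]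
  have hfiber := hT.nullMeasurableSet_preimage_singleton hn1n.le
  have hcond : ∀ i b, 0 < μ {ω | (nbhdGraph G (T ω) i).Iso (g i) ∧ T ω i = b} →
      condExpEvent μ {ω | (nbhdGraph G (T ω) i).Iso (g i) ∧ T ω i = b} (Y i)
        = (b2r b * τ i + F (g i)) + α := by
    intro i b hpos
    let S := {t | (nbhdGraph G t i).Iso (g i) ∧ t i = b}
    rw [← hεmean i]
    refine condExpEvent_eq_add_integral_of_measure_inter
      (nullMeasurableSet_preimage_of_singleton hfiber S) hpos.ne' (fun ω hω => ?_) (hε i)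
      fun B hB => measure_inter_preimage_eq_mul_of_singleton hfiber
        ((hε i).aemeasurable.nullMeasurable hB) (hind i B hB) S
    rw [hY, hω.2, hF _ _ hω.1]
  have hcontrast : ∀ i,
      condExpEvent μ {ω | (nbhdGraph G (T ω) i).Iso (g i) ∧ T ω i = true} (Y i) -
        condExpEvent μ {ω | (nbhdGraph G (T ω) i).Iso (g i) ∧ T ω i = false} (Y i) = τ i := by
    intro i
    rw [hcond i true (hA1 i), hcond i false (hA0 i)]
    simp [b2r]
  have htreated : ∀ i c, ∫ ω, b2r (T ω i) * c ∂μ = n1 / n * c := fun i c => by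
    rw [integral_b2r_mul_const (nullMeasurableSet_preimage_of_singleton hfiber {t | t i = true}) c,
      hT.measureReal_apply_eq_true hn1 hn1n.le]
  have hdirect : ∀ i, ∫ ω, (Ypot i (fun j => if j = i then true else false) ω -
      Ypot i (fun _ => false) ω) ∂μ = τ i := by
    intro i
    simp only [hYpot, hF _ _ (nbhdGraph_iso_of_treat_self G i)]
    simp [b2r]
  simp_rw [hcontrast, htreated, hdirect, ← mul_sum]
  field_simp
end

section
/- Suppose there are N units, one designated vertex in each of N disjoint graphs on n vertices, where the graphs are drawn i.i.d. from a probability mass function p over simple graphs on n vertices, and independently within each graph a treatment vector is drawn uniformly from assignments with exactly n⁽¹⁾ of the n vertices treated (0 < n⁽¹⁾ < n), so in particular each designated vertex is treated with probability n⁽¹⁾/n. Unit i is a fixed treated target whose labeled neighborhood graph equals a fixed labeled graph h. Say j ∈ MG_i if T_j = 0 and d_w(h, G_{N_j}^{T_j}) ≤ d_w(h, G_{N_k}^{T_k}) for every candidate k ≠ i with T_k = 0. Then for any graph g on n vertices and treatment assignment t of g with exactly n⁽¹⁾ treated and the designated vertex of g untreated, P( j ∈ MG_i | T_j = t, G_{N_j}^{T_j}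 = g_{N_j}^t ) = ( n⁽¹⁾/n + ((n − n⁽¹⁾)/n)·C(g_{N_j}^t) )^{N−2}, where C(g_{N_j}^t) = P( d_w(h, G_{N_k}^{T_k}) ≥ d_w(h, g_{N_j}^t) | T_k = 0 ) for a single independently drawn candidate k. -/
open MeasureTheory
open scoped ENNReal Classical

/-- `Cval n1 v0 p w h gN = P( d_w(h, G_{N_k}^{T_k}) ≥ d_w(h, gN) | T_k = 0 )` for a single
candidate `k` whose graph is drawn from `p` and whose treatment is uniform over assignments
with exactly `n1` treated, conditioned on the designated vertex `v0` being untreated: the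
conditional law puts mass `p(g')·binom(n−1, n1)⁻¹` on each pair `(g', t')` with `t'` having
`n1` treated units and `t' v0 = false`. -/
noncomputable def Cval {n : ℕ} (n1 : ℕ) (v0 : Fin n) (p : SimpleGraph (Fin n) → ℝ≥0∞)
    (w : LClass (Fin n) → ℝ) (h : LGraph (Fin n)) (gN : LGraph (Fin n)) : ℝ :=
  ∑ g' : SimpleGraph (Fin n), ∑ t' : Fin n → Bool,
    if countTreated t' = n1 ∧ t' v0 = false ∧ dw w h gN ≤ dw w h (nbhdGraph g' t' v0)
    then (p g').toReal * (((n - 1).choose n1 : ℝ))⁻¹ else 0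

/-!
Given unit `j`'s own configuration, `j ∈ MG_i` says that every other candidate `k ∉ {i, j}`
is treated at its designated vertex or lies at distance at least `d_w(h, g_{N_j}^t)` from `h`.
The (graph, treatment) pairs of the units are i.i.d., so these `N - 2` events are independent,
each of probability `n⁽¹⁾/n + ((n - n⁽¹⁾)/n) · C`.
-/

open Finset

theorem prod_ite_eq_ite_eq {ι M : Type*} [Fintype ι] [DecidableEq ι] [CommMonoid M]
    {i j : ι} (hij : i ≠ j) (a b c : M) :
    ∏ k, (if k = j then a else if k = i then b else c) = a * b * c ^ (Fintype.card ι - 2) := by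
  rw [← mul_prod_erase univ _ (mem_univ j), if_pos rfl,
    ← mul_prod_erase _ _ (mem_erase.mpr ⟨hij, mem_univ i⟩), if_neg hij, if_pos rfl,
    prod_congr rfl fun k hk => by
      rw [if_neg (mem_erase.mp (mem_erase.mp hk).2).1, if_neg (mem_erase.mp hk).1],
    prod_const, card_erase_of_mem (mem_erase.mpr ⟨hij, mem_univ i⟩),
    card_erase_of_mem (mem_univ j), card_univ, mul_assoc, Nat.sub_sub]

theorem sum_pi_ite_forall_prod {ι X R : Type*} [Fintype ι] [DecidableEq ι] [Fintype X]
    [CommSemiring R] (P : ι → X → Prop) [∀ k, DecidablePred (P k)] (π : X → R) :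
    ∑ c : ι → X, (if ∀ k, P k (c k) then ∏ k, π (c k) else 0)
      = ∏ k, ∑ x, if P k x then π x else 0 := by
  rw [Fintype.prod_sum]
  exact sum_congr rfl fun c _ => Fintype.prod_ite_zero.symm

theorem choose_pred_div_choose {n k : ℕ} (hk : k < n) :
    ((n - 1).choose k : ℝ) / n.choose k = (n - k) / n := by
  have hid := Nat.choose_mul_succ_eq (n - 1) k
  rw [Nat.sub_add_cancel (by omega : 1 ≤ n)] at hid
  have hC : (n.choose k : ℝ) ≠ 0 := by exact_mod_cast (Nat.choose_pos hk.le).ne'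
  have hn : (n : ℝ) ≠ 0 := by exact_mod_cast (by omega : n ≠ 0)
  rw [div_eq_div_iff hC hn]
  have hidR : ((n - 1).choose k * n : ℝ) = n.choose k * ((n - k : ℕ) : ℝ) := by
    exact_mod_cast hid
  rw [Nat.cast_sub hk.le, mul_comm (n.choose k : ℝ)] at hidR
  exact hidR

section Atoms

variable {Ω X : Type*} [MeasurableSpace Ω] {μ : Measure Ω} [Fintype X] {f : Ω → X}
  {π : X → ℝ≥0∞}

theorem measure_preimage_le_sum_of_atoms (hatom : ∀ x, μ (f ⁻¹' {x}) = π x) (Q : X → Prop)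
    [DecidablePred Q] :
    μ {ω | Q (f ω)} ≤ ∑ x, if Q x then π x else 0 := by
  have hcover : {ω | Q (f ω)} ⊆ ⋃ x ∈ univ.filter Q, f ⁻¹' {x} := fun ω hω => by
    simpa using hω
  calc μ {ω | Q (f ω)} ≤ ∑ x ∈ univ.filter Q, μ (f ⁻¹' {x}) :=
        (measure_mono hcover).trans (measure_biUnion_finset_le _ _)
    _ = ∑ x, if Q x then π x else 0 := by simp only [hatom, sum_filter]

/-- Outer measure is only subadditive, so the lower bound comes from the upper bound on the
complement together with `∑ π = 1`; no measurability of `f` is needed. -/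
theorem measure_preimage_eq_sum_of_atoms [IsProbabilityMeasure μ] (hπ : ∑ x, π x = 1)
    (hatom : ∀ x, μ (f ⁻¹' {x}) = π x) (Q : X → Prop)
    [DecidablePred Q] :
    μ {ω | Q (f ω)} = ∑ x, if Q x then π x else 0 := by
  refine le_antisymm (measure_preimage_le_sum_of_atoms hatom Q) ?_
  set b := ∑ x, if ¬ Q x then π x else 0
  have hsplit : (∑ x, if Q x then π x else 0) + b = 1 := by
    rw [← sum_add_distrib, ← hπ]
    exact sum_congr rfl fun x _ => by split_ifs <;> simp
  have hb : b ≠ ⊤ := ne_top_of_le_ne_top ENNReal.one_ne_top (hsplit ▸ le_add_self)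
  refine ENNReal.le_of_add_le_add_right hb ?_
  calc (∑ x, if Q x then π x else 0) + b = μ (Set.univ) := by rw [hsplit, measure_univ]
    _ ≤ μ ({ω | Q (f ω)} ∪ {ω | ¬ Q (f ω)}) := measure_mono fun ω _ => em (Q (f ω))
    _ ≤ μ {ω | Q (f ω)} + μ {ω | ¬ Q (f ω)} := measure_union_le _ _
    _ ≤ μ {ω | Q (f ω)} + b := by
        gcongr; exact measure_preimage_le_sum_of_atoms hatom fun x => ¬ Q x

end Atoms

section Independence

variable {ι X Ω : Type*} [Fintype ι] [DecidableEq ι] [Fintype X] [MeasurableSpace Ω]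
  {μ : Measure Ω} [IsProbabilityMeasure μ] {Y : ι → Ω → X} {π : X → ℝ≥0∞}

theorem measure_forall_eq_prod_of_atoms (hπ : ∑ x, π x = 1)
    (hatom : ∀ c : ι → X, μ ((fun ω k => Y k ω) ⁻¹' {c}) = ∏ k, π (c k))
    (P : ι → X → Prop) [∀ k, DecidablePred (P k)] :
    μ {ω | ∀ k, P k (Y k ω)} = ∏ k, ∑ x, if P k x then π x else 0 := by
  have htotal : ∑ c : ι → X, ∏ k, π (c k) = 1 := by
    rw [← Fintype.prod_sum (fun _ => π), hπ, prod_const_one]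
  rw [← sum_pi_ite_forall_prod]
  convert measure_preimage_eq_sum_of_atoms htotal hatom (fun c => ∀ k, P k (c k)) using 3

theorem measure_apply_and_forall_ne_eq_of_atoms (hπ : ∑ x, π x = 1)
    (hatom : ∀ c : ι → X, μ ((fun ω k => Y k ω) ⁻¹' {c}) = ∏ k, π (c k))
    {i j : ι} (hij : i ≠ j) (A C : X → Prop) [DecidablePred A] [DecidablePred C] :
    μ {ω | A (Y j ω) ∧ ∀ k, k ≠ i → k ≠ j → C (Y k ω)}
      = (∑ x, if A x then π x else 0) * (∑ x, if C x then π x else 0) ^ (Fintype.card ι - 2) := by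
  set P : ι → X → Prop := fun k => if k = j then A else if k = i then fun _ => True else C
  have hset : {ω | A (Y j ω) ∧ ∀ k, k ≠ i → k ≠ j → C (Y k ω)} = {ω | ∀ k, P k (Y k ω)} := by
    ext ω
    refine ⟨fun ⟨hA, hC⟩ k => ?_, fun hP => ⟨by simpa [P] using hP j, fun k hki hkj => ?_⟩⟩
    · by_cases hkj : k = j
      · simpa [P, hkj] using hA
      · by_cases hki : k = i
        · simp [P, hki, hij]
        · simp [P, hkj, hki, hC k]
    · simpa [P, hki, hkj] using hP k
  have hfactor : ∀ k, (∑ x, if P k x then π x else 0)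
      = if k = j then ∑ x, (if A x then π x else 0)
        else if k = i then 1 else ∑ x, if C x then π x else 0 := fun k => by
    by_cases hkj : k = j
    · simp [P, hkj]
    · by_cases hki : k = i
      · simp [P, hki, hij, hπ]
      · simp [P, hkj, hki]
  rw [hset, measure_forall_eq_prod_of_atoms hπ hatom, prod_congr rfl fun k _ => hfactor k,
    prod_ite_eq_ite_eq hij, mul_one]

theorem measure_apply_eq_of_atoms (hπ : ∑ x, π x = 1)
    (hatom : ∀ c : ι → X, μ ((fun ω k => Y k ω) ⁻¹' {c}) = ∏ k, π (c k))
    (j : ι) (A : X → Prop) [DecidablePred A] :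
    μ {ω | A (Y j ω)} = ∑ x, if A x then π x else 0 := by
  have hset : {ω | A (Y j ω)} = {ω | ∀ k, k = j → A (Y k ω)} := by
    ext ω
    exact ⟨fun hA k hk => hk ▸ hA, fun hA => hA j rfl⟩
  have hfactor : ∀ k, (∑ x, if (k = j → A x) then π x else 0)
      = if k = j then ∑ x, (if A x then π x else 0) else 1 := fun k => by
    by_cases hkj : k = j <;> simp [hkj, hπ]
  rw [hset, measure_forall_eq_prod_of_atoms hπ hatom fun k x => k = j → A x,
    prod_congr rfl fun k _ => hfactor k, Fintype.prod_ite_eq']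

end Independence

theorem setOf_forall_le_inter_setOf_eq {ι X Ω β : Type*} [Preorder β] {Y : ι → Ω → X}
    {U K : X → Prop} {D : X → β} {d₀ : β} {i j : ι} (hK : ∀ x, K x → U x ∧ D x = d₀) :
    {ω | U (Y j ω) ∧ ∀ k, k ≠ i → U (Y k ω) → D (Y j ω) ≤ D (Y k ω)} ∩ {ω | K (Y j ω)}
      = {ω | K (Y j ω) ∧ ∀ k, k ≠ i → k ≠ j → U (Y k ω) → d₀ ≤ D (Y k ω)} := by
  ext ω
  constructor
  · rintro ⟨⟨-, hmin⟩, hKj⟩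
    exact ⟨hKj, fun k hki _ hk => (hK _ hKj).2 ▸ hmin k hki hk⟩
  · rintro ⟨hKj, hle⟩
    obtain ⟨hUj, hDj⟩ := hK _ hKj
    refine ⟨⟨hUj, fun k hki hk => hDj ▸ ?_⟩, hKj⟩
    by_cases hkj : k = j
    · rw [hkj, hDj]
    · exact hle k hki hkj hk

theorem card_filter_countTreated_eq_of_support {n : ℕ} (s : Finset (Fin n)) (k : ℕ) :
    (univ.filter fun t : Fin n → Bool => countTreated t = k ∧ ∀ v ∉ s, t v = false).card
      = s.card.choose k := by
  rw [← card_powersetCard]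
  refine card_bij' (fun t _ => univ.filter fun v => t v = true) (fun u _ v => decide (v ∈ u))
    ?_ ?_ ?_ ?_
  · intro t ht
    simp only [mem_filter, mem_univ, true_and] at ht
    refine mem_powersetCard.mpr ⟨fun v hv => ?_, ht.1⟩
    by_contra hvs
    simp [ht.2 v hvs] at hv
  · intro u hu
    obtain ⟨hus, hcard⟩ := mem_powersetCard.mp hu
    simp only [mem_filter, mem_univ, true_and]
    refine ⟨?_, fun v hv => ?_⟩
    · simpa [countTreated] using hcard
    · simpa using fun hvu => hv (hus hvu)
  · intro t _
    funext v
    simp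
  · intro u _
    ext v
    simp

theorem card_filter_countTreated_eq (n k : ℕ) :
    (univ.filter fun t : Fin n → Bool => countTreated t = k).card = n.choose k := by
  simpa using card_filter_countTreated_eq_of_support (univ : Finset (Fin n)) k

theorem card_filter_countTreated_eq_and_apply_eq_false {n : ℕ} (k : ℕ) (v0 : Fin n) :
    (univ.filter fun t : Fin n → Bool => countTreated t = k ∧ t v0 = false).card
      = (n - 1).choose k := by
  have hsupp : ∀ t : Fin n → Bool,
      (∀ v ∉ univ.erase v0, t v = false) ↔ t v0 = false := by
    simp
  simpa [hsupp] using card_filter_countTreated_eq_of_support (univ.erase v0) k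

noncomputable def unitWeight {n : ℕ} (n1 : ℕ) (p : SimpleGraph (Fin n) → ℝ≥0∞)
    (x : SimpleGraph (Fin n) × (Fin n → Bool)) : ℝ≥0∞ :=
  if countTreated x.2 = n1 then p x.1 * (n.choose n1 : ℝ≥0∞)⁻¹ else 0

theorem sum_unitWeight {n n1 : ℕ} (hn1n : n1 ≤ n) {p : SimpleGraph (Fin n) → ℝ≥0∞}
    (hp : ∑ g, p g = 1) : ∑ x, unitWeight n1 p x = 1 := by
  have hC : (n.choose n1 : ℝ≥0∞) ≠ 0 := by exact_mod_cast (Nat.choose_pos hn1n).ne'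
  rw [Fintype.sum_prod_type, ← hp]
  refine sum_congr rfl fun g _ => ?_
  simp only [unitWeight]
  rw [← sum_filter, sum_const, card_filter_countTreated_eq, nsmul_eq_mul, mul_left_comm,
    ENNReal.mul_inv_cancel hC (ENNReal.natCast_ne_top _), mul_one]

theorem measure_config_eq_prod {n N n1 : ℕ} {Ω : Type*} [MeasurableSpace Ω] {μ : Measure Ω}
    {Gr : Fin N → Ω → SimpleGraph (Fin n)} {Tr : Fin N → Ω → (Fin n → Bool)}
    {p : SimpleGraph (Fin n) → ℝ≥0∞}
    (hiid : ∀ (gs : Fin N → SimpleGraph (Fin n)) (ts : Fin N → Fin n → Bool),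
      (∀ k, countTreated (ts k) = n1) →
      μ {ω | ∀ k, Gr k ω = gs k ∧ Tr k ω = ts k} =
        ∏ k : Fin N, (p (gs k) * ((n.choose n1 : ℝ≥0∞))⁻¹))
    (hsupp : ∀ (k : Fin N) (t : Fin n → Bool), countTreated t ≠ n1 →
      μ {ω | Tr k ω = t} = 0)
    (c : Fin N → SimpleGraph (Fin n) × (Fin n → Bool)) :
    μ ((fun ω k => (Gr k ω, Tr k ω)) ⁻¹' {c}) = ∏ k, unitWeight n1 p (c k) := by
  have hset : (fun ω k => (Gr k ω, Tr k ω)) ⁻¹' {c}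
      = {ω | ∀ k, Gr k ω = (c k).1 ∧ Tr k ω = (c k).2} := by
    ext ω
    simp [funext_iff, Prod.ext_iff]
  rw [hset]
  by_cases hc : ∀ k, countTreated (c k).2 = n1
  · rw [hiid _ _ hc]
    exact prod_congr rfl fun k _ => by simp [unitWeight, hc k]
  · push Not at hc
    obtain ⟨k, hk⟩ := hc
    rw [prod_eq_zero (mem_univ k) (by simp [unitWeight, hk])]
    exact measure_mono_null (fun ω hω => (hω k).2) (hsupp k _ hk)

section UnitLaw

variable {n n1 : ℕ} {p : SimpleGraph (Fin n) → ℝ≥0∞}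

theorem toReal_unitWeight (x : SimpleGraph (Fin n) × (Fin n → Bool)) :
    (unitWeight n1 p x).toReal
      = if countTreated x.2 = n1 then (p x.1).toReal / n.choose n1 else 0 := by
  unfold unitWeight
  split_ifs <;> simp [div_eq_mul_inv]

theorem sum_toReal_unitWeight_untreated (hp : ∑ g, p g = 1) (v0 : Fin n) :
    ∑ x, (if x.2 v0 = false then (unitWeight n1 p x).toReal else 0)
      = ((n - 1).choose n1 : ℝ) / n.choose n1 := by
  have hpR : ∑ g, (p g).toReal = 1 := by
    rw [← ENNReal.toReal_sum fun g _ => ENNReal.sum_ne_top.1 (hp ▸ ENNReal.one_ne_top) g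
      (mem_univ g), hp, ENNReal.toReal_one]
  have hx : ∀ x : SimpleGraph (Fin n) × (Fin n → Bool),
      (if x.2 v0 = false then (unitWeight n1 p x).toReal else 0)
        = if countTreated x.2 = n1 ∧ x.2 v0 = false then (p x.1).toReal / n.choose n1 else 0 :=
    fun x => by rw [toReal_unitWeight]; split_ifs <;> simp_all
  rw [sum_congr rfl fun x _ => hx x, Fintype.sum_prod_type, ← one_mul (_ / _), ← hpR, sum_mul]
  refine sum_congr rfl fun g _ => ?_
  dsimp only
  rw [← sum_filter, sum_const, card_filter_countTreated_eq_and_apply_eq_false, nsmul_eq_mul]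
  ring

theorem ite_toReal_unitWeight_untreated (hn1n : n1 < n) (v0 : Fin n)
    (E : SimpleGraph (Fin n) × (Fin n → Bool) → Prop) (x : SimpleGraph (Fin n) × (Fin n → Bool)) :
    (if x.2 v0 = false ∧ E x then (unitWeight n1 p x).toReal else 0)
      = ((n - 1).choose n1 : ℝ) / n.choose n1 * (if countTreated x.2 = n1 ∧ x.2 v0 = false ∧ E x
          then (p x.1).toReal * ((n - 1).choose n1 : ℝ)⁻¹ else 0) := by
  have hC : (n.choose n1 : ℝ) ≠ 0 := by exact_mod_cast (Nat.choose_pos hn1n.le).ne'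
  have hC' : ((n - 1).choose n1 : ℝ) ≠ 0 := by
    exact_mod_cast (Nat.choose_pos (by omega : n1 ≤ n - 1)).ne'
  by_cases hx : countTreated x.2 = n1 ∧ x.2 v0 = false ∧ E x
  · rw [if_pos hx.2, if_pos hx, toReal_unitWeight, if_pos hx.1]
    field_simp
  · rw [if_neg hx, mul_zero, toReal_unitWeight]
    split_ifs <;> simp_all

theorem toReal_sum_unitWeight_imp (hn1n : n1 < n) (hp : ∑ g, p g = 1) (v0 : Fin n)
    (E : SimpleGraph (Fin n) × (Fin n → Bool) → Prop) :
    (∑ x, if (x.2 v0 = false → E x) then unitWeight n1 p x else 0).toReal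
      = n1 / n + (n - n1) / n * ∑ g', ∑ t' : Fin n → Bool,
          if countTreated t' = n1 ∧ t' v0 = false ∧ E (g', t')
          then (p g').toReal * ((n - 1).choose n1 : ℝ)⁻¹ else 0 := by
  have hw_ne_top : ∀ x, unitWeight n1 p x ≠ ⊤ := fun x =>
    ENNReal.sum_ne_top.1 (sum_unitWeight hn1n.le hp ▸ ENNReal.one_ne_top) x (mem_univ x)
  have htotal : ∑ x, (unitWeight n1 p x).toReal = 1 := by
    rw [← ENNReal.toReal_sum fun x _ => hw_ne_top x, sum_unitWeight hn1n.le hp,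
      ENNReal.toReal_one]
  have hn : (n : ℝ) ≠ 0 := by exact_mod_cast (by omega : n ≠ 0)
  calc (∑ x, if (x.2 v0 = false → E x) then unitWeight n1 p x else 0).toReal
      = ∑ x, if (x.2 v0 = false → E x) then (unitWeight n1 p x).toReal else 0 := by
        rw [ENNReal.toReal_sum fun x _ => by split_ifs <;> simp [hw_ne_top]]
        exact sum_congr rfl fun x _ => by split_ifs <;> simp
    _ = ∑ x, (unitWeight n1 p x).toReal
          - ∑ x, (if x.2 v0 = false then (unitWeight n1 p x).toReal else 0)
          + ∑ x, (if x.2 v0 = false ∧ E x then (unitWeight n1 p x).toReal else 0) := by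
        rw [← sum_sub_distrib, ← sum_add_distrib]
        refine sum_congr rfl fun x _ => ?_
        by_cases hA : x.2 v0 = false <;> by_cases hE : E x <;> simp [hA, hE]
    _ = _ := by
        simp only [htotal, sum_toReal_unitWeight_untreated hp,
          ite_toReal_unitWeight_untreated hn1n, ← mul_sum, Fintype.sum_prod_type,
          choose_pred_div_choose hn1n]
        field_simp
        ring

end UnitLaw

theorem prob_in_matched_group_general
    (n N n1 : ℕ) (hn1n : n1 < n)
    (v0 : Fin n)                              -- the designated vertex of each graph
    (Ω : Type) [MeasurableSpace Ω] (μ : Measure Ω) [IsProbabilityMeasure μ]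
    (Gr : Fin N → Ω → SimpleGraph (Fin n))    -- the N candidate graphs
    (Tr : Fin N → Ω → (Fin n → Bool))         -- the N treatment vectors
    (p : SimpleGraph (Fin n) → ℝ≥0∞) (hp : ∑ g : SimpleGraph (Fin n), p g = 1)
    (hiid : ∀ (gs : Fin N → SimpleGraph (Fin n)) (ts : Fin N → Fin n → Bool),
      (∀ k, countTreated (ts k) = n1) →
      μ {ω | ∀ k, Gr k ω = gs k ∧ Tr k ω = ts k} =
        ∏ k : Fin N, (p (gs k) * ((n.choose n1 : ℝ≥0∞))⁻¹))
    (hsupp : ∀ (k : Fin N) (t : Fin n → Bool), countTreated t ≠ n1 →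
      μ {ω | Tr k ω = t} = 0)
    (i j : Fin N) (hij : i ≠ j)
    (h : LGraph (Fin n))                      -- the target's fixed labeled neighborhood
    (w : LClass (Fin n) → ℝ)
    (g : SimpleGraph (Fin n)) (t : Fin n → Bool)
    (htv0 : t v0 = false)
    -- the conditioning event has positive probability
    (hB : μ {ω | Tr j ω = t ∧
      nbhdGraph (Gr j ω) (Tr j ω) v0 = nbhdGraph g t v0} ≠ 0) :
    (μ ({ω | Tr j ω v0 = false ∧ ∀ k : Fin N, k ≠ i → Tr k ω v0 = false →
          dw w h (nbhdGraph (Gr j ω) (Tr j ω) v0) ≤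
            dw w h (nbhdGraph (Gr k ω) (Tr k ω) v0)} ∩
        {ω | Tr j ω = t ∧ nbhdGraph (Gr j ω) (Tr j ω) v0 = nbhdGraph g t v0}) /
      μ {ω | Tr j ω = t ∧ nbhdGraph (Gr j ω) (Tr j ω) v0 = nbhdGraph g t v0}).toReal =
      ((n1 : ℝ) / (n : ℝ) + (((n : ℝ) - (n1 : ℝ)) / (n : ℝ)) *
        Cval n1 v0 p w h (nbhdGraph g t v0)) ^ (N - 2) := by
  have hunit := sum_unitWeight hn1n.le hp
  have hatom := measure_config_eq_prod hiid hsupp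
  set A : SimpleGraph (Fin n) × (Fin n → Bool) → Prop :=
    fun x => x.2 = t ∧ nbhdGraph x.1 x.2 v0 = nbhdGraph g t v0
  have hA : ∀ x, A x → x.2 v0 = false ∧
      dw w h (nbhdGraph x.1 x.2 v0) = dw w h (nbhdGraph g t v0) := fun x ⟨hxt, hxg⟩ =>
    ⟨hxt ▸ htv0, congrArg (dw w h) hxg⟩
  have hden : μ {ω | Tr j ω = t ∧ nbhdGraph (Gr j ω) (Tr j ω) v0 = nbhdGraph g t v0}
      = ∑ x, if A x then unitWeight n1 p x else 0 :=
    measure_apply_eq_of_atoms hunit hatom j A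
  rw [setOf_forall_le_inter_setOf_eq (Y := fun k ω => (Gr k ω, Tr k ω)) hA,
    measure_apply_and_forall_ne_eq_of_atoms hunit hatom hij A fun x =>
      x.2 v0 = false → dw w h (nbhdGraph g t v0) ≤ dw w h (nbhdGraph x.1 x.2 v0),
    Fintype.card_fin, hden, mul_comm,
    ENNReal.mul_div_cancel_right (hden ▸ hB) (hden ▸ measure_ne_top μ _), ENNReal.toReal_pow,
    toReal_sum_unitWeight_imp hn1n hp, Cval]

/-- with `N` i.i.d. candidate graphs and independent uniform treatment of
exactly `n⁽¹⁾` units per graph, a treated target `i` with fixed labeled neighborhood `h`,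
for any graph `g` and admissible assignment `t` (with `n⁽¹⁾` treated and the designated
vertex untreated),
`P(j ∈ MG_i | T_j = t, G_{N_j}^{T_j} = g_{N_j}^t) = (n⁽¹⁾/n + ((n−n⁽¹⁾)/n)·C(g_{N_j}^t))^{N−2}`. -/
theorem prob_in_matched_group
    (n N n1 : ℕ) (hn1 : 0 < n1) (hn1n : n1 < n)
    (v0 : Fin n)                              -- the designated vertex of each graph
    (Ω : Type) [MeasurableSpace Ω] (μ : Measure Ω) [IsProbabilityMeasure μ]
    (Gr : Fin N → Ω → SimpleGraph (Fin n))    -- the N candidate graphs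
    (Tr : Fin N → Ω → (Fin n → Bool))         -- the N treatment vectors
    (p : SimpleGraph (Fin n) → ℝ≥0∞) (hp : ∑ g : SimpleGraph (Fin n), p g = 1)
    (hiid : ∀ (gs : Fin N → SimpleGraph (Fin n)) (ts : Fin N → Fin n → Bool),
      (∀ k, countTreated (ts k) = n1) →
      μ {ω | ∀ k, Gr k ω = gs k ∧ Tr k ω = ts k} =
        ∏ k : Fin N, (p (gs k) * ((n.choose n1 : ℝ≥0∞))⁻¹))
    (hsupp : ∀ (k : Fin N) (t : Fin n → Bool), countTreated t ≠ n1 →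
      μ {ω | Tr k ω = t} = 0)
    (i j : Fin N) (hij : i ≠ j)
    (h : LGraph (Fin n))                      -- the target's fixed labeled neighborhood
    (w : LClass (Fin n) → ℝ) (hw : ∀ c, 0 ≤ w c)
    (g : SimpleGraph (Fin n)) (t : Fin n → Bool)
    (ht : countTreated t = n1) (htv0 : t v0 = false)
    -- the conditioning event has positive probability
    (hB : μ {ω | Tr j ω = t ∧
      nbhdGraph (Gr j ω) (Tr j ω) v0 = nbhdGraph g t v0} ≠ 0) :
    (μ ({ω | Tr j ω v0 = false ∧ ∀ k : Fin N, k ≠ i → Tr k ω v0 = false →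
          dw w h (nbhdGraph (Gr j ω) (Tr j ω) v0) ≤
            dw w h (nbhdGraph (Gr k ω) (Tr k ω) v0)} ∩
        {ω | Tr j ω = t ∧ nbhdGraph (Gr j ω) (Tr j ω) v0 = nbhdGraph g t v0}) /
      μ {ω | Tr j ω = t ∧ nbhdGraph (Gr j ω) (Tr j ω) v0 = nbhdGraph g t v0}).toReal =
      ((n1 : ℝ) / (n : ℝ) + (((n : ℝ) - (n1 : ℝ)) / (n : ℝ)) *
        Cval n1 v0 p w h (nbhdGraph g t v0)) ^ (N - 2) :=
  prob_in_matched_group_general n N n1 hn1n v0 Ω μ Gr Tr p hp hiid hsupp i j hij h w g t htv0 hB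
end
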